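/- For every simplicial complex X on a finite vertex set, the collapsibility number is bounded above by the theta-number: C(X) ≤ θ(X). -/

import Mathlib

namespace ThetaPaper

variable {α : Type*} [DecidableEq α]

def delF (X : Finset (Finset α)) (v : α) : Finset (Finset α) :=
  X.filter fun S => v ∉ S

def lkF (X : Finset (Finset α)) (v : α) : Finset (Finset α) :=
  X.filter fun T => v ∉ T ∧ insert v T ∈ X

def vertF (X : Finset (Finset α)) : Finset α := X.biUnion id

def nonConeF (X : Finset (Finset α)) : Finset α :=
  (vertF X).filter fun v => delF X v ≠ lkF X v

lemma delF_card_lt {X : Finset (Finset α)} {v : α} (h : v ∈ nonConeF X) :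
    (delF X v).card < X.card := by
  obtain ⟨A, hA, hvA⟩ := Finset.mem_biUnion.mp (Finset.mem_filter.mp h).1
  refine Finset.card_lt_card ⟨Finset.filter_subset _ _, fun hsub => ?_⟩
  have h2 := hsub hA
  rw [delF, Finset.mem_filter] at h2
  exact h2.2 hvA

lemma lkF_card_lt {X : Finset (Finset α)} {v : α} (h : v ∈ nonConeF X) :
    (lkF X v).card < X.card := by
  obtain ⟨A, hA, hvA⟩ := Finset.mem_biUnion.mp (Finset.mem_filter.mp h).1
  refine Finset.card_lt_card ⟨Finset.filter_subset _ _, fun hsub => ?_⟩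
  have h2 := hsub hA
  rw [lkF, Finset.mem_filter] at h2
  exact h2.2.1 hvA

def theta (X : Finset (Finset α)) : ℕ :=
  if h : (nonConeF X).Nonempty then
    (nonConeF X).attach.inf' (Finset.attach_nonempty_iff.mpr h) fun v =>
      max (theta (delF X v.1)) (theta (lkF X v.1) + 1)
  else 0
termination_by X.card
decreasing_by
  · exact delF_card_lt v.2
  · exact lkF_card_lt v.2

def IsComplex (X : Finset (Finset α)) : Prop :=
  ∀ A ∈ X, ∀ B, B ⊆ A → B ∈ X

/-- `dim(X)`, as an integer: the maximum of `|A| - 1` over faces `A ∈ X`. -/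
noncomputable def dimZ (X : Finset (Finset α)) : ℤ :=
  sSup {d : ℤ | ∃ A ∈ X, d = (A.card : ℤ) - 1}

/-- A circuit (minimal non-face) of `X`. -/
def IsCircuit (X : Finset (Finset α)) (S : Finset α) : Prop :=
  S ∉ X ∧ ∀ T ⊂ S, T ∈ X

/-- A circuit cover of `X`. -/
def IsCircuitCover (X : Finset (Finset α)) (C : Finset α) : Prop :=
  ∀ S : Finset α, IsCircuit X S → (S.card : ℤ) - 1 ≤ ((S ∩ C).card : ℤ)

/-- The circuit cover number `ccn(X)` of a complex with vertex set `V`. -/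
noncomputable def ccnZ (V : Finset α) (X : Finset (Finset α)) : ℤ :=
  sInf {k : ℤ | ∃ C ⊆ V, IsCircuitCover X C ∧
    k = dimZ (X.filter fun A => A ⊆ C) + 1}

/-- The simplicial join. -/
def joinF (X₁ X₂ : Finset (Finset α)) : Finset (Finset α) :=
  X₁.biUnion fun A => X₂.image fun B => A ∪ B

/-- A facet (maximal face) of `X`. -/
def IsFacet (X : Finset (Finset α)) (B : Finset α) : Prop :=
  B ∈ X ∧ ∀ C ∈ X, B ⊆ C → C = B

/-- An elementary `k`-collapse: remove the interval `[A, B]` where `A` is a face of size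
at most `k` contained in the unique facet `B`. -/
def ElemCollapse (k : ℕ) (X Y : Finset (Finset α)) : Prop :=
  ∃ A B : Finset α, A ∈ X ∧ A.card ≤ k ∧ IsFacet X B ∧ A ⊆ B ∧
    (∀ C, IsFacet X C → A ⊆ C → C = B) ∧
    Y = X.filter fun C => ¬ (A ⊆ C ∧ C ⊆ B)

/-- `X` is `k`-collapsible: it reduces to the void complex by elementary `k`-collapses. -/
def Collapsible (k : ℕ) (X : Finset (Finset α)) : Prop :=
  Relation.ReflTransGen (ElemCollapse k) X ∅

/-- The collapsibility number `C(X)`. -/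
noncomputable def collapseNum (X : Finset (Finset α)) : ℕ :=
  sInf {k : ℕ | Collapsible k X}

/-- `k(X)`: the maximum size of a set `{x₁, …, x_k}` of vertices of `X` admitting facets
`A₁, …, A_{k+1}` with `x_i ∉ A_i` and `x_i ∈ A_j` for `i < j`. -/
noncomputable def kNum (X : Finset (Finset α)) : ℕ :=
  sSup {k : ℕ | ∃ (x : Fin k → α) (A : Fin (k + 1) → Finset α),
    Function.Injective x ∧ (∀ i, {x i} ∈ X) ∧ (∀ j, IsFacet X (A j)) ∧
    (∀ i : Fin k, x i ∉ A i.castSucc) ∧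
    (∀ (i : Fin k) (j : Fin (k + 1)), (i : ℕ) < (j : ℕ) → x i ∈ A j)}

/-- Vertex decomposable simplicial complexes. -/
inductive VertexDecomposable : Finset (Finset α) → Prop
  | simplex (S : Finset α) : VertexDecomposable S.powerset
  | shed (X : Finset (Finset α)) (v : α) (hv : {v} ∈ X)
      (hdel : VertexDecomposable (delF X v)) (hlk : VertexDecomposable (lkF X v))
      (hfacet : ∀ B, IsFacet (delF X v) B → IsFacet X B) : VertexDecomposable X

section Graphs

variable {V : Type*} [Fintype V] [DecidableEq V]

open Classical in
/-- The independence complex of a graph, as a `Finset` of faces. -/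
noncomputable def indComplex (G : SimpleGraph V) : Finset (Finset V) :=
  Finset.univ.powerset.filter fun A => ∀ x ∈ A, ∀ y ∈ A, ¬ G.Adj x y

/-- The theta-number of a graph: the theta-number of its independence complex. -/
noncomputable def thetaG (G : SimpleGraph V) : ℕ := theta (indComplex G)

/-- A graph is chordal if it has no induced cycle of length greater than `3`. -/
def Chordal {W : Type*} (G : SimpleGraph W) : Prop :=
  ∀ n : ℕ, 3 < n → IsEmpty (SimpleGraph.cycleGraph n ↪g G)

/-- Contraction of the edge `xy`: the merged vertex is `x`, and `y` becomes isolated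
(isolated vertices are irrelevant for the independence complex/theta-number). -/
def contractEdge (G : SimpleGraph V) (x y : V) : SimpleGraph V where
  Adj a b := a ≠ b ∧ a ≠ y ∧ b ≠ y ∧
    ((a = x ∧ (G.Adj x b ∨ G.Adj y b)) ∨
     (b = x ∧ (G.Adj a x ∨ G.Adj a y)) ∨
     (a ≠ x ∧ b ≠ x ∧ G.Adj a b))
  symm := by
    constructor
    rintro a b ⟨hab, hay, hby, h⟩
    refine ⟨Ne.symm hab, hby, hay, ?_⟩
    rcases h with ⟨ha, h⟩ | ⟨hb, h⟩ | ⟨ha, hb, h⟩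
    · exact Or.inr (Or.inl ⟨ha, h.imp (fun t => t.symm) (fun t => t.symm)⟩)
    · exact Or.inl ⟨hb, h.imp (fun t => t.symm) (fun t => t.symm)⟩
    · exact Or.inr (Or.inr ⟨hb, ha, h.symm⟩)
  loopless := by constructor; rintro a ⟨h, -⟩; exact h rfl

/-- One edge-contraction step: `H` is obtained from `G` by contracting an edge of `G`. -/
def ContractionStep (G H : SimpleGraph V) : Prop :=
  ∃ x y, G.Adj x y ∧ H = contractEdge G x y

/-- A matching of `G` (a set of pairwise disjoint edges). -/
def IsMatching (G : SimpleGraph V) (M : Finset (Sym2 V)) : Prop :=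
  (∀ e ∈ M, e ∈ G.edgeSet) ∧
    ∀ e ∈ M, ∀ f ∈ M, e ≠ f → ∀ x, x ∈ e → x ∉ f

/-- An induced matching of `G`: a matching such that no two vertices belonging to
different edges of it are adjacent. -/
def IsInducedMatching (G : SimpleGraph V) (M : Finset (Sym2 V)) : Prop :=
  IsMatching G M ∧ ∀ e ∈ M, ∀ f ∈ M, e ≠ f → ∀ x ∈ e, ∀ y ∈ f, ¬ G.Adj x y

/-- The induced matching number `im(G)`. -/
noncomputable def inducedMatchingNum (G : SimpleGraph V) : ℕ :=
  sSup {k : ℕ | ∃ M, IsInducedMatching G M ∧ M.card = k}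

/-- A maximal matching. -/
def IsMaximalMatching (G : SimpleGraph V) (M : Finset (Sym2 V)) : Prop :=
  IsMatching G M ∧ ∀ N, IsMatching G N → M ⊆ N → N = M

/-- `min-m(G)`: the minimum size of a maximal matching. -/
noncomputable def minMaximalMatchingNum (G : SimpleGraph V) : ℕ :=
  sInf {k : ℕ | ∃ M, IsMaximalMatching G M ∧ M.card = k}

/-- Independent (stable) sets of a graph. -/
def IsIndepSet (G : SimpleGraph V) (A : Finset V) : Prop :=
  ∀ x ∈ A, ∀ y ∈ A, ¬ G.Adj x y

/-- A vertex cover. -/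
def IsVertexCover (G : SimpleGraph V) (C : Finset V) : Prop :=
  ∀ x y, G.Adj x y → x ∈ C ∨ y ∈ C

/-- `α(G[F])`: the maximum size of an independent set of `G` contained in `F`. -/
noncomputable def indepNumOn (G : SimpleGraph V) (F : Finset V) : ℕ :=
  sSup {k : ℕ | ∃ A ⊆ F, IsIndepSet G A ∧ A.card = k}

/-- The circuit cover number of a graph: `ccn(G) = min{α(G[F]) : F a vertex cover}`. -/
noncomputable def ccnG (G : SimpleGraph V) : ℕ :=
  sInf {k : ℕ | ∃ F, IsVertexCover G F ∧ k = indepNumOn G F}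

open Classical in
/-- The closed neighborhood of a vertex, as a `Finset`. -/
noncomputable def closedNbhd (G : SimpleGraph V) (x : V) : Finset V :=
  Finset.univ.filter fun z => z = x ∨ G.Adj x z

/-- The maximum privacy degree `Γ(G) = max{|N[x] \ N[y]| : xy ∈ E(G)}`. -/
noncomputable def privacyDeg (G : SimpleGraph V) : ℕ :=
  sSup {k : ℕ | ∃ x y, G.Adj x y ∧ k = (closedNbhd G x \ closedNbhd G y).card}

open Classical in
/-- The maximum degree `Δ(G)`. -/
noncomputable def maxDeg (G : SimpleGraph V) : ℕ :=
  sSup {k : ℕ | ∃ v, k = (Finset.univ.filter fun z => G.Adj v z).card}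

end Graphs

open Classical in
/-- `V(M)`: the set of vertices incident to the edges of `M`. -/
noncomputable def matchVerts {V : Type*} [Fintype V] (M : Finset (Sym2 V)) : Finset V :=
  Finset.univ.filter fun x => ∃ e ∈ M, x ∈ e

variable {X : Finset (Finset α)}

/-! Induct along the recursion defining `θ`. If every vertex of `X` is a cone vertex, `X` is a
simplex and one elementary `0`-collapse removes it. Otherwise, for the minimising vertex `v`,
`X = del(X;v) ∪ v * lk(X;v)`; coning each elementary `k`-collapse of `lk(X;v)` with `v` gives an
elementary `(k+1)`-collapse of `X`, so `X` collapses onto `del(X;v)` through faces of size at most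
`θ(lk(X;v)) + 1`, and `del(X;v)` then collapses with faces of size at most `θ(del(X;v))`. -/

lemma isComplex_delF (hX : IsComplex X) (v : α) : IsComplex (delF X v) := by
  intro A hA B hB
  rw [delF, Finset.mem_filter] at hA ⊢
  exact ⟨hX A hA.1 B hB, fun hv => hA.2 (hB hv)⟩

lemma isComplex_lkF (hX : IsComplex X) (v : α) : IsComplex (lkF X v) := by
  intro A hA B hB
  rw [lkF, Finset.mem_filter] at hA ⊢
  exact ⟨hX A hA.1 B hB, fun hv => hA.2.1 (hB hv),
    hX _ hA.2.2 _ (Finset.insert_subset_insert v hB)⟩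

lemma notMem_of_mem_delF {v : α} {C : Finset α} (h : C ∈ delF X v) : v ∉ C :=
  (Finset.mem_filter.mp h).2

lemma notMem_of_mem_lkF {v : α} {C : Finset α} (h : C ∈ lkF X v) : v ∉ C :=
  (Finset.mem_filter.mp h).2.1

lemma IsComplex.eq_delF_union_image_insert_lkF (hX : IsComplex X) (v : α) :
    X = delF X v ∪ (lkF X v).image (insert v) := by
  ext C
  simp only [Finset.mem_union, delF, lkF, Finset.mem_filter, Finset.mem_image]
  constructor
  · intro hC
    by_cases hv : v ∈ C
    · refine Or.inr ⟨C.erase v, ⟨hX C hC _ (Finset.erase_subset v C),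
        Finset.notMem_erase v C, ?_⟩, Finset.insert_erase hv⟩
      rwa [Finset.insert_erase hv]
    · exact Or.inl ⟨hC, hv⟩
  · rintro (⟨hC, -⟩ | ⟨E, ⟨-, -, hins⟩, rfl⟩)
    · exact hC
    · exact hins

lemma reflTransGen_elemCollapse_mono {k k' : ℕ} (hk : k ≤ k') {Y : Finset (Finset α)}
    (h : Relation.ReflTransGen (ElemCollapse k) X Y) :
    Relation.ReflTransGen (ElemCollapse k') X Y :=
  Relation.ReflTransGen.mono
    (fun _ _ ⟨A, B, hA, hcard, hrest⟩ => ⟨A, B, hA, hcard.trans hk, hrest⟩) _ _ h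

section Cone

variable {v : α} {D L : Finset (Finset α)}

lemma exists_eq_insert_of_mem_union_image_insert (hD : ∀ C ∈ D, v ∉ C) {C : Finset α}
    (hC : C ∈ D ∪ L.image (insert v)) (hvC : v ∈ C) : ∃ E ∈ L, insert v E = C := by
  rcases Finset.mem_union.mp hC with hCD | hCL
  · exact absurd hvC (hD C hCD)
  · exact Finset.mem_image.mp hCL

lemma mem_of_insert_mem_union_image_insert (hD : ∀ C ∈ D, v ∉ C) (hL : ∀ C ∈ L, v ∉ C)
    {E : Finset α} (hvE : v ∉ E) (hE : insert v E ∈ D ∪ L.image (insert v)) : E ∈ L := by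
  obtain ⟨E', hE', hEq⟩ :=
    exists_eq_insert_of_mem_union_image_insert hD hE (Finset.mem_insert_self v E)
  have : E' = E := by
    rw [← Finset.erase_insert (hL E' hE'), hEq, Finset.erase_insert hvE]
  exact this ▸ hE'

lemma isFacet_union_image_insert_iff (hD : ∀ C ∈ D, v ∉ C) (hL : ∀ C ∈ L, v ∉ C)
    {E : Finset α} (hvE : v ∉ E) :
    IsFacet (D ∪ L.image (insert v)) (insert v E) ↔ IsFacet L E := by
  constructor
  · rintro ⟨hE, hmax⟩
    refine ⟨mem_of_insert_mem_union_image_insert hD hL hvE hE, fun F hF hEF => ?_⟩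
    have hFE := hmax (insert v F) (Finset.mem_union_right _ (Finset.mem_image_of_mem _ hF))
      (Finset.insert_subset_insert v hEF)
    exact hEF.antisymm' ((Finset.insert_subset_insert_iff (hL F hF)).mp hFE.le)
  · rintro ⟨hE, hmax⟩
    refine ⟨Finset.mem_union_right _ (Finset.mem_image_of_mem _ hE), fun C hC hEC => ?_⟩
    obtain ⟨F, hF, rfl⟩ := exists_eq_insert_of_mem_union_image_insert hD hC
      (hEC (Finset.mem_insert_self v E))
    rw [hmax F hF ((Finset.insert_subset_insert_iff hvE).mp hEC)]

lemma filter_union_image_insert (hD : ∀ C ∈ D, v ∉ C) (hL : ∀ C ∈ L, v ∉ C)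
    {A B : Finset α} (hvA : v ∉ A) :
    (D ∪ L.image (insert v)).filter (fun C => ¬ (insert v A ⊆ C ∧ C ⊆ insert v B)) =
      D ∪ (L.filter fun C => ¬ (A ⊆ C ∧ C ⊆ B)).image (insert v) := by
  rw [Finset.filter_union, Finset.filter_image]
  congr 1
  · exact Finset.filter_true_of_mem fun C hC hAC => hD C hC (hAC.1 (Finset.mem_insert_self v A))
  · congr 1
    refine Finset.filter_congr fun E hE => ?_
    rw [Finset.insert_subset_insert_iff hvA, Finset.insert_subset_insert_iff (hL E hE)]

lemma ElemCollapse.union_image_insert {k : ℕ} {M : Finset (Finset α)}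
    (hD : ∀ C ∈ D, v ∉ C) (hL : ∀ C ∈ L, v ∉ C) (h : ElemCollapse k L M) :
    ElemCollapse (k + 1) (D ∪ L.image (insert v)) (D ∪ M.image (insert v)) := by
  obtain ⟨A, B, hA, hcard, hB, hAB, huniq, rfl⟩ := h
  have hvA : v ∉ A := hL A hA
  refine ⟨insert v A, insert v B, Finset.mem_union_right _ (Finset.mem_image_of_mem _ hA),
    (Finset.card_insert_le v A).trans (Nat.add_le_add_right hcard 1),
    (isFacet_union_image_insert_iff hD hL (hL B hB.1)).mpr hB,
    Finset.insert_subset_insert v hAB, fun C hC hAC => ?_,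
    (filter_union_image_insert hD hL hvA).symm⟩
  obtain ⟨E, hE, rfl⟩ :=
    exists_eq_insert_of_mem_union_image_insert hD hC.1 (hAC (Finset.mem_insert_self v A))
  rw [huniq E ((isFacet_union_image_insert_iff hD hL (hL E hE)).mp hC)
    ((Finset.insert_subset_insert_iff hvA).mp hAC)]

lemma ElemCollapse.subset {k : ℕ} {Y : Finset (Finset α)} (h : ElemCollapse k X Y) :
    Y ⊆ X := by
  obtain ⟨A, B, -, -, -, -, -, rfl⟩ := h
  exact Finset.filter_subset _ X

lemma Collapsible.union_image_insert {k : ℕ} (hD : ∀ C ∈ D, v ∉ C)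
    (hL : ∀ C ∈ L, v ∉ C) (h : Collapsible k L) :
    Relation.ReflTransGen (ElemCollapse (k + 1)) (D ∪ L.image (insert v)) D := by
  induction h using Relation.ReflTransGen.head_induction_on with
  | refl => simpa using Relation.ReflTransGen.refl
  | head hstep _ ih =>
    exact .head (hstep.union_image_insert hD hL)
      (ih fun C hC => hL C (hstep.subset hC))

end Cone

lemma collapsible_of_delF_of_lkF (hX : IsComplex X) {v : α} {k l : ℕ}
    (hdel : Collapsible k (delF X v)) (hlk : Collapsible l (lkF X v)) :
    Collapsible (max k (l + 1)) X := by
  have hstar : Relation.ReflTransGen (ElemCollapse (l + 1)) X (delF X v) := by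
    have := hlk.union_image_insert (D := delF X v)
      (fun _ => notMem_of_mem_delF) (fun _ => notMem_of_mem_lkF)
    rwa [← hX.eq_delF_union_image_insert_lkF v] at this
  exact (reflTransGen_elemCollapse_mono (le_max_right _ _) hstar).trans
    (reflTransGen_elemCollapse_mono (le_max_left _ _) hdel)

lemma insert_mem_of_notMem_nonConeF {v : α} (hv : v ∈ vertF X) (hcone : v ∉ nonConeF X)
    {A : Finset α} (hA : A ∈ X) : insert v A ∈ X := by
  by_cases hvA : v ∈ A
  · rwa [Finset.insert_eq_of_mem hvA]
  · have hdl : delF X v = lkF X v := by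
      simpa [nonConeF, hv] using hcone
    have hA' : A ∈ lkF X v := hdl ▸ Finset.mem_filter.mpr ⟨hA, hvA⟩
    exact (Finset.mem_filter.mp hA').2.2

lemma IsComplex.eq_powerset_vertF (hX : IsComplex X) (hne : X.Nonempty)
    (hcone : nonConeF X = ∅) : X = (vertF X).powerset := by
  ext A
  rw [Finset.mem_powerset]
  refine ⟨fun hA => Finset.subset_biUnion_of_mem id hA, fun hA => ?_⟩
  induction A using Finset.induction_on with
  | empty =>
    obtain ⟨B, hB⟩ := hne
    exact hX B hB ∅ (Finset.empty_subset B)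
  | insert a s _ ih =>
    rw [Finset.insert_subset_iff] at hA
    exact insert_mem_of_notMem_nonConeF hA.1 (by simp [hcone]) (ih hA.2)

lemma elemCollapse_powerset (S : Finset α) : ElemCollapse 0 S.powerset ∅ := by
  have hS : IsFacet S.powerset S := ⟨Finset.mem_powerset_self S,
    fun C hC hSC => (Finset.mem_powerset.mp hC).antisymm hSC⟩
  refine ⟨∅, S, Finset.empty_mem_powerset S, le_rfl, hS, Finset.empty_subset S,
    fun C hC _ => (hC.2 S hS.1 (Finset.mem_powerset.mp hC.1)).symm, ?_⟩
  refine (Finset.filter_false_of_mem fun C hC => ?_).symm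
  exact not_not.mpr ⟨Finset.empty_subset C, Finset.mem_powerset.mp hC⟩

lemma collapsible_zero_of_nonConeF_eq_empty (hX : IsComplex X) (hcone : nonConeF X = ∅) :
    Collapsible 0 X := by
  rcases X.eq_empty_or_nonempty with rfl | hne
  · exact .refl
  · rw [hX.eq_powerset_vertF hne hcone]
    exact .single (elemCollapse_powerset _)

lemma theta_of_nonConeF_eq_empty (h : nonConeF X = ∅) : theta X = 0 := by
  rw [theta, dif_neg (Finset.not_nonempty_iff_eq_empty.mpr h)]

lemma exists_theta_eq_max (h : (nonConeF X).Nonempty) :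
    ∃ v ∈ nonConeF X, theta X = max (theta (delF X v)) (theta (lkF X v) + 1) := by
  obtain ⟨v, -, hv⟩ := Finset.exists_mem_eq_inf' (Finset.attach_nonempty_iff.mpr h)
    fun v : nonConeF X => max (theta (delF X v.1)) (theta (lkF X v.1) + 1)
  rw [theta, dif_pos h]
  exact ⟨v.1, v.2, hv⟩

theorem collapsible_theta {X : Finset (Finset α)} (hX : IsComplex X) :
    Collapsible (theta X) X := by
  rcases (nonConeF X).eq_empty_or_nonempty with hcone | hne
  · rw [theta_of_nonConeF_eq_empty hcone]
    exact collapsible_zero_of_nonConeF_eq_empty hX hcone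
  · obtain ⟨v, hv, hθ⟩ := exists_theta_eq_max hne
    rw [hθ]
    exact collapsible_of_delF_of_lkF hX (collapsible_theta (isComplex_delF hX v))
      (collapsible_theta (isComplex_lkF hX v))
termination_by X.card
decreasing_by
  · exact delF_card_lt hv
  · exact lkF_card_lt hv

theorem collapseNum_le_theta (hX : IsComplex X) : collapseNum X ≤ theta X :=
  Nat.sInf_le (collapsible_theta hX)

end ThetaPaper
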